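/- For every ε > 0 there exists N such that for all integers g ≥ N and m ≥ N, the quantity ( ln((2g)!) + 4·ln(m!) − m·ln((2⌊g/m⌋ + 2)!) ) / ( 2g·ln m + 4m·ln m ) lies within ε of 1. In other words, as g and m both tend to infinity (jointly, with no constraint on their relative growth), ln( (2g)! · (m!)^4 / ((2⌊g/m⌋+2)!)^m ) is asymptotically equivalent to 2g·ln m + 4m·ln m. -/
import Mathlib
open Real Filter Nat

lemma log_fact_le (n : ℕ) : Real.log (n ! : ℝ) ≤ n * Real.log n := by
  rcases Nat.eq_zero_or_pos n with h | h
  · simp [h]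
  · have h1 : (n ! : ℝ) ≤ (n : ℝ) ^ n := by
      exact_mod_cast Nat.factorial_le_pow n
    calc Real.log (n ! : ℝ) ≤ Real.log ((n:ℝ)^n) :=
          Real.log_le_log (by positivity) h1
      _ = n * Real.log n := Real.log_pow n n

lemma le_log_fact (n : ℕ) : (n : ℝ) * Real.log n - n ≤ Real.log (n ! : ℝ) := by
  rcases Nat.eq_zero_or_pos n with h | h
  · simp [h]
  · have h1 : (n:ℝ)^n / (n ! : ℝ) ≤ Real.exp n :=
      Real.pow_div_factorial_le_exp (x := (n:ℝ)) (by positivity) n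
    have hf : (0:ℝ) < (n ! : ℝ) := by exact_mod_cast Nat.factorial_pos n
    have h2 : (n:ℝ)^n ≤ Real.exp n * (n ! : ℝ) := by
      rw [div_le_iff₀ hf] at h1; linarith
    have h3 : Real.log ((n:ℝ)^n) ≤ Real.log (Real.exp n * (n ! : ℝ)) :=
      Real.log_le_log (by positivity) h2
    rw [Real.log_pow, Real.log_mul (Real.exp_ne_zero _) (ne_of_gt hf), Real.log_exp] at h3
    linarith

/-- Lemma A.1(2): as `g` and `m` jointly tend to infinity,
`(ln((2g)!) + 4 ln(m!) − m ln((2⌊g/m⌋+2)!)) / (2g ln m + 4m ln m) → 1`. -/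
theorem limit1_part2 :
    ∀ ε : ℝ, 0 < ε → ∃ N : ℕ, ∀ g m : ℕ, N ≤ g → N ≤ m →
      |(Real.log ((2 * g)! : ℝ) + 4 * Real.log (m ! : ℝ) -
            (m : ℝ) * Real.log (((2 * (g / m) + 2)!) : ℝ)) /
          (2 * (g : ℝ) * Real.log m + 4 * (m : ℝ) * Real.log m) - 1| < ε := by
  intro ε hε
  refine ⟨⌈Real.exp (3/ε)⌉₊ + 2, fun g m hg hm => ?_⟩
  have hm2 : 2 ≤ m := le_trans (by omega) hm
  have hg2 : 2 ≤ g := le_trans (by omega) hg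
  have hMpos : (0:ℝ) < m := by exact_mod_cast Nat.pos_of_ne_zero (by omega)
  have hGpos : (0:ℝ) < g := by exact_mod_cast Nat.pos_of_ne_zero (by omega)
  -- log m is large
  have hlogm : 3/ε < Real.log m := by
    have h1 : Real.exp (3/ε) < (m:ℝ) := by
      have h2 : (⌈Real.exp (3/ε)⌉₊ : ℝ) < (m:ℝ) := by
        exact_mod_cast (by omega : ⌈Real.exp (3/ε)⌉₊ < m)
      exact lt_of_le_of_lt (Nat.le_ceil _) h2
    rwa [← Real.exp_lt_exp, Real.exp_log hMpos]
  have hlogm_pos : 0 < Real.log m := lt_trans (by positivity) hlogm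
  -- notation
  set G : ℝ := (g:ℝ) with hG
  set M : ℝ := (m:ℝ) with hM
  set Q : ℝ := ((g/m : ℕ):ℝ) with hQ
  set Lm : ℝ := Real.log M with hLm
  set Lg : ℝ := Real.log (2*G) with hLg
  set L3 : ℝ := Real.log (2*Q+2) with hL3
  set S1 : ℝ := Real.log ((2*g)! : ℝ) with hS1
  set S2 : ℝ := Real.log (m ! : ℝ) with hS2
  set S3 : ℝ := Real.log (((2*(g/m)+2)! : ℕ) : ℝ) with hS3
  have hQ0 : (0:ℝ) ≤ Q := Nat.cast_nonneg _
  -- division facts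
  have hqm : Q * M ≤ G := by
    rw [hQ, hM, hG]; exact_mod_cast Nat.div_mul_le_self g m
  have hgm : G < Q * M + M := by
    have hmod : ((g % m : ℕ):ℝ) < M := by
      rw [hM]; exact_mod_cast Nat.mod_lt g (by omega)
    have hdm : M * Q + ((g % m : ℕ):ℝ) = G := by
      rw [hM, hQ, hG]; exact_mod_cast Nat.div_add_mod g m
    have hmod0 : (0:ℝ) ≤ ((g % m : ℕ):ℝ) := Nat.cast_nonneg _
    linarith [hdm, hmod, hmod0]
  -- Stirling bounds
  have h1l : 2*G*Lg - 2*G ≤ S1 := by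
    have h := le_log_fact (2*g); rw [hS1, hLg, hG]; push_cast at h ⊢; linarith
  have h1u : S1 ≤ 2*G*Lg := by
    have h := log_fact_le (2*g); rw [hS1, hLg, hG]; push_cast at h ⊢; linarith
  have h2l : M*Lm - M ≤ S2 := by
    have h := le_log_fact m; rw [hS2, hLm, hM]; push_cast at h ⊢; linarith
  have h2u : S2 ≤ M*Lm := by
    have h := log_fact_le m; rw [hS2, hLm, hM]; push_cast at h ⊢; linarith
  have h3l : (2*Q+2)*L3 - (2*Q+2) ≤ S3 := by
    have h := le_log_fact (2*(g/m)+2); rw [hS3, hL3, hQ]; push_cast at h ⊢; linarith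
  have h3u : S3 ≤ (2*Q+2)*L3 := by
    have h := log_fact_le (2*(g/m)+2); rw [hS3, hL3, hQ]; push_cast at h ⊢; linarith
  -- log inequalities
  have hL3nonneg : 0 ≤ L3 := Real.log_nonneg (by linarith)
  have hi : Lg ≤ Lm + L3 := by
    have ha : 2*G ≤ M*(2*Q+2) := by linarith [hgm]
    calc Lg ≤ Real.log (M*(2*Q+2)) := Real.log_le_log (by positivity) ha
      _ = Lm + L3 := Real.log_mul (by positivity) (by positivity)
  have hii : L3 ≤ 2*Q+1 := by
    have h := Real.log_le_sub_one_of_pos (show (0:ℝ) < 2*Q+2 by positivity)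
    rw [hL3]; linarith
  have hiii : Lm + L3 ≤ Lg + M/G := by
    have he : (2*G)*(1+M/G) = 2*G + 2*M := by field_simp
    have ha : M*(2*Q+2) ≤ (2*G)*(1+M/G) := by linarith [hqm, he]
    have hb : Lm + L3 ≤ Real.log ((2*G)*(1+M/G)) := by
      rw [← Real.log_mul (by positivity) (by positivity)]
      exact Real.log_le_log (by positivity) ha
    rw [Real.log_mul (by positivity) (by positivity)] at hb
    have hc := Real.log_le_sub_one_of_pos (show (0:ℝ) < 1+M/G by positivity)
    rw [hLg]; linarith
  -- products
  have p1 : 2*G*Lg ≤ 2*G*(Lm + L3) :=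
    mul_le_mul_of_nonneg_left hi (by positivity)
  have p2 : (0:ℝ) ≤ (M*(2*Q+2) - 2*G) * L3 := by
    apply mul_nonneg _ hL3nonneg; linarith [hgm]
  have p3 : M*(2*Q+2) ≤ 2*G + 2*M := by linarith [hqm]
  have p4 : 2*G*(Lm + L3) ≤ 2*G*(Lg + M/G) :=
    mul_le_mul_of_nonneg_left hiii (by positivity)
  have p4' : 2*G*(M/G) = 2*M := by field_simp
  have p5 : (0:ℝ) ≤ (G - Q*M) * L3 := mul_nonneg (by linarith) hL3nonneg
  have p6 : 2*M*L3 ≤ 2*M*(2*Q+1) := mul_le_mul_of_nonneg_left hii (by positivity)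
  set Num : ℝ := S1 + 4*S2 - M*S3 with hNum
  set D : ℝ := 2*G*Lm + 4*M*Lm with hD
  have hDpos : 0 < D := by
    have h := mul_pos (show (0:ℝ) < 2*G+4*M by linarith) hlogm_pos
    rw [hD]; linarith [h]
  have hms3l : M*((2*Q+2)*L3 - (2*Q+2)) ≤ M*S3 :=
    mul_le_mul_of_nonneg_left h3l (by positivity)
  have hms3u : M*S3 ≤ M*((2*Q+2)*L3) :=
    mul_le_mul_of_nonneg_left h3u (by positivity)
  have hub : Num - D ≤ 2*G + 2*M := by
    rw [hNum, hD]; linarith [h1u, h2u, p1, p2, p3, hms3l]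
  have hlb : -(6*G + 8*M) ≤ Num - D := by
    rw [hNum, hD]; linarith [h1l, h2l, hms3u, p4, p4', p5, p6, hqm]
  have hεL : 3 < ε * Lm := by
    rw [div_lt_iff₀ hε] at hlogm; rw [hLm, hM]; linarith
  have hεD : 6*G + 12*M < ε * D := by
    have h7 : 3*(2*G+4*M) < (ε*Lm)*(2*G+4*M) :=
      mul_lt_mul_of_pos_right hεL (by linarith)
    have h8 : ε * D = (ε*Lm)*(2*G+4*M) := by rw [hD]; ring
    rw [h8]; linarith
  have key : |Num - D| < ε * D := by
    rw [abs_lt]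
    constructor
    · linarith [hlb, hεD, hMpos]
    · linarith [hub, hεD, hGpos, hMpos]
  have heq : (Num - D)/D = Num/D - 1 := by
    rw [sub_div, div_self hDpos.ne']
  rw [← heq, abs_div, abs_of_pos hDpos, div_lt_iff₀ hDpos]
  linarith [key]
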